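/- Let Q be the fork query over five binary relations A, B, C, D, E on a finite type: Q = {(a₁,...,a₆) : (a₁,a₂) ∈ A ∧ (a₂,a₃) ∈ B ∧ (a₃,a₄) ∈ C ∧ (a₃,a₅) ∈ D ∧ (a₃,a₆) ∈ E}. Then |Q| ≤ |B| · d_C · d_A · d_E · d_D, where d_C = max_v |{c : (v,c) ∈ C}|, d_A = max_v |{a : (a,v) ∈ A}| (max in-degree), d_E = max_v |{e : (v,e) ∈ E}|, and d_D = max_v |{d : (v,d) ∈ D}|. -/

import Mathlib

/-!
Every answer `(a₁,…,a₆)` restricts to the `B`-edge `(a₂,a₃)`. Once that edge is fixed, `a₁` is an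
in-neighbour of `a₂` in `A`, and `a₄, a₅, a₆` are out-neighbours of `a₃` in `C, D, E`, chosen
independently; so each `B`-edge extends to at most `d_A · d_C · d_D · d_E` answers.
-/

/-- Maximum out-degree of a finite binary relation: `max_v |{c : (v,c) ∈ S}|`. -/
def maxOutDeg {α : Type*} [Fintype α] [DecidableEq α] (S : Finset (α × α)) : ℕ :=
  Finset.univ.sup (fun v => (S.filter (fun p => p.1 = v)).card)

/-- Maximum in-degree of a finite binary relation: `max_v |{a : (a,v) ∈ R}|`. -/
def maxInDeg {α : Type*} [Fintype α] [DecidableEq α] (R : Finset (α × α)) : ℕ :=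
  Finset.univ.sup (fun v => (R.filter (fun p => p.2 = v)).card)

namespace Finset

variable {α : Type*} [DecidableEq α]

def outNbrs (S : Finset (α × α)) (v : α) : Finset α :=
  (S.filter (fun p => p.1 = v)).image Prod.snd

def inNbrs (R : Finset (α × α)) (v : α) : Finset α :=
  (R.filter (fun p => p.2 = v)).image Prod.fst

@[simp]
theorem mem_outNbrs {S : Finset (α × α)} {v w : α} : w ∈ outNbrs S v ↔ (v, w) ∈ S := by
  simp [outNbrs]

@[simp]
theorem mem_inNbrs {R : Finset (α × α)} {v u : α} : u ∈ inNbrs R v ↔ (u, v) ∈ R := by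
  simp [inNbrs]

variable [Fintype α]

theorem card_outNbrs_le_maxOutDeg (S : Finset (α × α)) (v : α) :
    (outNbrs S v).card ≤ maxOutDeg S :=
  card_image_le.trans (le_sup (f := fun v => (S.filter (fun p => p.1 = v)).card) (mem_univ v))

theorem card_inNbrs_le_maxInDeg (R : Finset (α × α)) (v : α) :
    (inNbrs R v).card ≤ maxInDeg R :=
  card_image_le.trans (le_sup (f := fun v => (R.filter (fun p => p.2 = v)).card) (mem_univ v))

end Finset

open Finset

section ForkQuery

variable {α : Type*} [DecidableEq α]

def forkQuery [Fintype α] (A B C D E : Finset (α × α)) : Finset (α × α × α × α × α × α) :=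
  univ.filter (fun t => (t.1, t.2.1) ∈ A ∧ (t.2.1, t.2.2.1) ∈ B ∧
    (t.2.2.1, t.2.2.2.1) ∈ C ∧ (t.2.2.1, t.2.2.2.2.1) ∈ D ∧ (t.2.2.1, t.2.2.2.2.2) ∈ E)

def forkExtensions (A C D E : Finset (α × α)) (e : α × α) : Finset (α × α × α × α × α × α) :=
  (inNbrs A e.1 ×ˢ outNbrs C e.2 ×ˢ outNbrs D e.2 ×ˢ outNbrs E e.2).image
    (fun x => (x.1, e.1, e.2, x.2.1, x.2.2.1, x.2.2.2))

theorem forkQuery_subset_biUnion_forkExtensions [Fintype α] (A B C D E : Finset (α × α)) :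
    forkQuery A B C D E ⊆ B.biUnion (forkExtensions A C D E) := by
  rintro ⟨a₁, a₂, a₃, a₄, a₅, a₆⟩ ht
  obtain ⟨hA, hB, hC, hD, hE⟩ := (mem_filter.1 ht).2
  exact mem_biUnion.2 ⟨(a₂, a₃), hB, mem_image.2
    ⟨(a₁, a₄, a₅, a₆), by simp only [mem_product, mem_inNbrs, mem_outNbrs]; exact ⟨hA, hC, hD, hE⟩, rfl⟩⟩

theorem card_forkExtensions_le [Fintype α] (A C D E : Finset (α × α)) (e : α × α) :
    (forkExtensions A C D E e).card
      ≤ maxOutDeg C * maxInDeg A * maxOutDeg E * maxOutDeg D :=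
  calc (forkExtensions A C D E e).card
      ≤ (inNbrs A e.1).card * ((outNbrs C e.2).card *
          ((outNbrs D e.2).card * (outNbrs E e.2).card)) :=
        card_image_le.trans_eq (by simp only [card_product])
    _ ≤ maxInDeg A * (maxOutDeg C * (maxOutDeg D * maxOutDeg E)) := by
        gcongr
        · exact card_inNbrs_le_maxInDeg A e.1
        · exact card_outNbrs_le_maxOutDeg C e.2
        · exact card_outNbrs_le_maxOutDeg D e.2
        · exact card_outNbrs_le_maxOutDeg E e.2
    _ = maxOutDeg C * maxInDeg A * maxOutDeg E * maxOutDeg D := by ring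

end ForkQuery

/-- For the fork query
`Q = {(a₁,…,a₆) : (a₁,a₂) ∈ A ∧ (a₂,a₃) ∈ B ∧ (a₃,a₄) ∈ C ∧ (a₃,a₅) ∈ D ∧ (a₃,a₆) ∈ E}`,
we have `|Q| ≤ |B| · d_C · d_A · d_E · d_D` where `d_C, d_E, d_D` are max out-degrees and
`d_A` is the max in-degree of `A`. -/
theorem stmt_19 {α : Type*} [Fintype α] [DecidableEq α]
    (A B C D E : Finset (α × α)) :
    ((Finset.univ : Finset (α × α × α × α × α × α)).filter
        (fun t => (t.1, t.2.1) ∈ A ∧ (t.2.1, t.2.2.1) ∈ B ∧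
          (t.2.2.1, t.2.2.2.1) ∈ C ∧ (t.2.2.1, t.2.2.2.2.1) ∈ D ∧
          (t.2.2.1, t.2.2.2.2.2) ∈ E)).card
      ≤ B.card * maxOutDeg C * maxInDeg A * maxOutDeg E * maxOutDeg D := by
  change (forkQuery A B C D E).card ≤ _
  calc (forkQuery A B C D E).card
      ≤ (B.biUnion (forkExtensions A C D E)).card :=
        card_le_card (forkQuery_subset_biUnion_forkExtensions A B C D E)
    _ ≤ B.card * (maxOutDeg C * maxInDeg A * maxOutDeg E * maxOutDeg D) :=
        card_biUnion_le_card_mul _ _ _ fun e _ => card_forkExtensions_le A C D E e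
    _ = B.card * maxOutDeg C * maxInDeg A * maxOutDeg E * maxOutDeg D := by ring
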